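/- arXiv:1806.10096 — 2 statements merged into one kernel-verified Lean document; each statement's English description precedes it below -/
import Mathlib

section
/- Let G = (V,E) be an infinite, locally finite tree (a connected acyclic simple graph) in which every vertex has degree at least 3, equipped with edge lengths ℓ : E → (0,∞). For an edge e with endpoints u and v set c(e) := 1/ℓ(e) − 1/m(u) − 1/m(v). Suppose there exist real numbers c₀ > 0 and M such that c(e) ≥ c₀ for all e ∈ E and m(v) ≤ M·ℓ(e) for every vertex v and every edge e ∈ E_v. Then α(G) ≥ c₀·M/(M−1) > 0. -/
open scoped BigOperators

noncomputable section

variable {V : Type*}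

/-- Total length of a set of edges. -/
def mes (ℓ : Sym2 V → ℝ) (E : Set (Sym2 V)) : ℝ := ∑ᶠ e ∈ E, ℓ e

/-- Weight `m(v)` of a vertex: total length of the edges incident to `v`. -/
def mval (G : SimpleGraph V) (ℓ : Sym2 V → ℝ) (v : V) : ℝ := ∑ᶠ e ∈ G.incidenceSet v, ℓ e

/-- Characteristic value of an edge (tree case: no tile terms). -/
def cVal (G : SimpleGraph V) (ℓ : Sym2 V → ℝ) (e : Sym2 V) : ℝ :=
  1 / ℓ e - ∑ᶠ w ∈ {w : V | w ∈ e}, 1 / mval G ℓ w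

/-- Boundary vertices of a subgraph. -/
def bdry (G : SimpleGraph V) (H : G.Subgraph) : Set V :=
  {v ∈ H.verts | (H.neighborSet v).ncard < (G.neighborSet v).ncard}

/-- Total (subgraph-)degree of the boundary of a subgraph. -/
def degBdry (G : SimpleGraph V) (H : G.Subgraph) : ℝ :=
  ∑ᶠ v ∈ bdry G H, ((H.neighborSet v).ncard : ℝ)

/-- Isoperimetric constant of a metric graph. -/
def alpha (G : SimpleGraph V) (ℓ : Sym2 V → ℝ) : ℝ :=
  sInf {x | ∃ H : G.Subgraph, H.verts.Finite ∧ H.Connected ∧ H.edgeSet.Nonempty ∧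
    x = degBdry G H / mes ℓ H.edgeSet}

/-- The star-like subgraph generated by a vertex set `U`: its edges are all the
edges of `G` incident to some vertex of `U`. -/
def starSubgraph (G : SimpleGraph V) (U : Set V) : G.Subgraph where
  verts := U ∪ {w | ∃ u ∈ U, G.Adj u w}
  Adj u w := G.Adj u w ∧ (u ∈ U ∨ w ∈ U)
  adj_sub h := h.1
  edge_vert h := h.2.elim (fun h' => Or.inl h') (fun h' => Or.inr ⟨_, h', h.1.symm⟩)
  symm := ⟨fun u w h => ⟨h.1.symm, h.2.symm⟩⟩


/-!
A finite connected subgraph `H` of a tree is a tree, so `#E(H) + 1 = #V(H)`. Summing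
`c(e) ℓ(e) = 1 - ℓ(e)/m(u) - ℓ(e)/m(v)` over the edges of `H` and regrouping by vertices gives
`#E(H) - Σ_{v ∈ V(H)} mes(E_v ∩ E(H)) / m(v)`. An interior vertex contributes exactly `1` to the
sum and a boundary vertex at least `deg_H(v) / M`; since every boundary vertex has `deg_H(v) ≥ 1`,
this yields `c₀ mes(H) ≤ deg(∂H) (1 - 1/M)`.
-/

section Finsum

variable {α M : Type*} [AddCommMonoid M] [PartialOrder M] {s : Set α}

theorem finsum_mem_le_finsum_mem [IsOrderedAddMonoid M] (hs : s.Finite) {f g : α → M}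
    (h : ∀ x ∈ s, f x ≤ g x) : ∑ᶠ x ∈ s, f x ≤ ∑ᶠ x ∈ s, g x := by
  rw [finsum_mem_eq_finite_toFinset_sum _ hs, finsum_mem_eq_finite_toFinset_sum _ hs]
  exact Finset.sum_le_sum fun x hx => h x (hs.mem_toFinset.mp hx)

theorem ncard_nsmul_le_finsum_mem [IsOrderedAddMonoid M] (hs : s.Finite) {f : α → M} {a : M}
    (h : ∀ x ∈ s, a ≤ f x) : s.ncard • a ≤ ∑ᶠ x ∈ s, f x := by
  rw [finsum_mem_eq_finite_toFinset_sum _ hs, Set.ncard_eq_toFinset_card _ hs]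
  exact Finset.card_nsmul_le_sum _ _ _ fun x hx => h x (hs.mem_toFinset.mp hx)

theorem finsum_mem_pos [IsOrderedCancelAddMonoid M] (hs : s.Finite) (hne : s.Nonempty)
    {f : α → M} (h : ∀ x ∈ s, 0 < f x) : 0 < ∑ᶠ x ∈ s, f x := by
  rw [finsum_mem_eq_finite_toFinset_sum _ hs]
  exact Finset.sum_pos (fun x hx => h x (hs.mem_toFinset.mp hx)) (by simpa using hne)

end Finsum

namespace SimpleGraph

variable {G : SimpleGraph V}

theorem ncard_incidenceSet (v : V) : (G.incidenceSet v).ncard = (G.neighborSet v).ncard := by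
  classical
  rw [← Nat.card_coe_set_eq, ← Nat.card_coe_set_eq,
    Nat.card_congr (G.incidenceSetEquivNeighborSet v)]

theorem finite_incidenceSet {v : V} (hv : (G.neighborSet v).Finite) :
    (G.incidenceSet v).Finite := by
  classical
  have : Finite (G.neighborSet v) := hv.to_subtype
  exact Set.finite_coe_iff.mp (Finite.of_equiv _ (G.incidenceSetEquivNeighborSet v).symm)

namespace Subgraph

theorem incidenceSet_eq_image (H : G.Subgraph) (v : V) :
    H.incidenceSet v = (s(v, ·)) '' H.neighborSet v := by
  ext e
  constructor
  · rintro ⟨he, hv⟩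
    obtain ⟨w, rfl⟩ := Sym2.mem_iff_exists.mp hv
    exact ⟨w, he, rfl⟩
  · rintro ⟨w, hw, rfl⟩
    exact ⟨hw, Sym2.mem_mk_left v w⟩

theorem ncard_incidenceSet (H : G.Subgraph) (v : V) :
    (H.incidenceSet v).ncard = (H.neighborSet v).ncard := by
  rw [incidenceSet_eq_image]
  exact Set.ncard_image_of_injective _ fun _ _ h => Sym2.congr_right.mp h

theorem incidenceSet_eq_of_neighborSet_eq {H : G.Subgraph} {v : V}
    (h : H.neighborSet v = G.neighborSet v) : H.incidenceSet v = G.incidenceSet v := by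
  ext e
  refine ⟨fun he => H.incidenceSet_subset_incidenceSet v he, fun ⟨he, hve⟩ => ⟨?_, hve⟩⟩
  obtain ⟨w, rfl⟩ := Sym2.mem_iff_exists.mp hve
  exact (h ▸ G.mem_edgeSet.mp he : w ∈ H.neighborSet v)

theorem edgeSet_finite {H : G.Subgraph} (hV : H.verts.Finite) : H.edgeSet.Finite := by
  refine ((hV.prod hV).image fun p => s(p.1, p.2)).subset fun e he => ?_
  induction e with
  | h u v => exact ⟨(u, v), ⟨H.edge_vert he, H.edge_vert (H.adj_symm he)⟩, rfl⟩

theorem Connected.neighborSet_nonempty {H : G.Subgraph} (hH : H.Connected)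
    (hE : H.edgeSet.Nonempty) {v : V} (hv : v ∈ H.verts) : (H.neighborSet v).Nonempty := by
  obtain ⟨e, he⟩ := hE
  induction e with
  | h a b =>
    have : Nontrivial H.verts :=
      ⟨⟨⟨a, H.edge_vert he⟩, ⟨b, H.edge_vert (H.adj_symm he)⟩,
        fun hab => (H.adj_sub he).ne (congrArg Subtype.val hab)⟩⟩
    exact hH.preconnected.exists_adj_of_nontrivial ⟨v, hv⟩

theorem finsum_edgeSet_finsum_mem_eq {M : Type*} [AddCommMonoid M] (H : G.Subgraph)
    (hV : H.verts.Finite) (f : Sym2 V → V → M) :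
    ∑ᶠ e ∈ H.edgeSet, ∑ᶠ v ∈ {v | v ∈ e}, f e v
      = ∑ᶠ v ∈ H.verts, ∑ᶠ e ∈ H.incidenceSet v, f e v := by
  classical
  have hE := edgeSet_finite hV
  have hleft : ∀ e ∈ hE.toFinset,
      ∑ᶠ v ∈ {v | v ∈ e}, f e v = ∑ v ∈ hV.toFinset with v ∈ e, f e v := by
    intro e he
    have hset : {v | v ∈ e} = ↑({v ∈ hV.toFinset | v ∈ e}) := by
      ext v
      simpa using fun hv => H.mem_verts_of_mem_edge (hE.mem_toFinset.mp he) hv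
    rw [hset, finsum_mem_coe_finset]
  have hright : ∀ v ∈ hV.toFinset,
      ∑ᶠ e ∈ H.incidenceSet v, f e v = ∑ e ∈ hE.toFinset with v ∈ e, f e v := by
    intro v _
    have hset : H.incidenceSet v = ↑({e ∈ hE.toFinset | v ∈ e}) := by
      ext e
      simp [Subgraph.incidenceSet]
    rw [hset, finsum_mem_coe_finset]
  rw [← hV.coe_toFinset, ← hE.coe_toFinset, finsum_mem_coe_finset, finsum_mem_coe_finset,
    Finset.sum_congr rfl hleft, Finset.sum_congr rfl hright]
  exact Finset.sum_comm' fun e v => by simp only [Set.Finite.mem_toFinset, Finset.mem_filter]; tauto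

end Subgraph

theorem IsAcyclic.ncard_edgeSet_add_one_of_subgraph (hG : G.IsAcyclic) {H : G.Subgraph}
    (hV : H.verts.Finite) (hH : H.Connected) : H.edgeSet.ncard + 1 = H.verts.ncard := by
  have : Finite H.verts := hV.to_subtype
  have hT : H.coe.IsTree := ⟨H.connected_iff'.mp hH, hG.subgraph H⟩
  rw [← H.image_coe_edgeSet_coe,
    Set.ncard_image_of_injective _ (Sym2.map.injective Subtype.val_injective),
    ← Nat.card_coe_set_eq, ← Nat.card_coe_set_eq]
  exact (isTree_iff_connected_and_card.mp hT).2

end SimpleGraph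

open SimpleGraph

section MetricGraph

variable {G : SimpleGraph V} {ℓ : Sym2 V → ℝ}

theorem mval_eq_mes (v : V) : mval G ℓ v = mes ℓ (G.incidenceSet v) := rfl

theorem mval_pos (hpos : ∀ e ∈ G.edgeSet, 0 < ℓ e) {v : V} (hv : (G.neighborSet v).Finite)
    (hne : (G.neighborSet v).Nonempty) : 0 < mval G ℓ v := by
  obtain ⟨w, hw⟩ := hne
  exact finsum_mem_pos (finite_incidenceSet hv) ⟨s(v, w), hw, Sym2.mem_mk_left v w⟩
    fun e he => hpos e he.1

theorem ncard_mul_mval_le_mul_mes {M : ℝ} {v : V}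
    (hM : ∀ e ∈ G.incidenceSet v, mval G ℓ v ≤ M * ℓ e) {S : Set (Sym2 V)} (hS : S.Finite)
    (hSv : S ⊆ G.incidenceSet v) : S.ncard * mval G ℓ v ≤ M * mes ℓ S := by
  rw [mes, mul_finsum_mem, ← nsmul_eq_mul]
  exact ncard_nsmul_le_finsum_mem hS fun e he => hM e (hSv he)

theorem ncard_neighborSet_le (hpos : ∀ e ∈ G.edgeSet, 0 < ℓ e) {M : ℝ} {v : V}
    (hv : (G.neighborSet v).Finite) (hne : (G.neighborSet v).Nonempty)
    (hM : ∀ e ∈ G.incidenceSet v, mval G ℓ v ≤ M * ℓ e) : ((G.neighborSet v).ncard : ℝ) ≤ M := by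
  have h := ncard_mul_mval_le_mul_mes hM (finite_incidenceSet hv) le_rfl
  rw [← mval_eq_mes, ncard_incidenceSet] at h
  exact le_of_mul_le_mul_right h (mval_pos hpos hv hne)

theorem cVal_mul_self {e : Sym2 V} (he : ℓ e ≠ 0) :
    cVal G ℓ e * ℓ e = 1 - ∑ᶠ w ∈ {w | w ∈ e}, ℓ e / mval G ℓ w := by
  simp only [cVal, sub_mul, one_div_mul_cancel he, finsum_mem_mul, one_div_mul_eq_div]

theorem finsum_cVal_mul_self {H : G.Subgraph} (hV : H.verts.Finite)
    (hℓ : ∀ e ∈ H.edgeSet, ℓ e ≠ 0) :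
    ∑ᶠ e ∈ H.edgeSet, cVal G ℓ e * ℓ e
      = H.edgeSet.ncard - ∑ᶠ v ∈ H.verts, mes ℓ (H.incidenceSet v) / mval G ℓ v := by
  have hE := Subgraph.edgeSet_finite hV
  rw [finsum_mem_congr rfl fun e he => cVal_mul_self (hℓ e he),
    finsum_mem_sub_distrib _ _ hE, H.finsum_edgeSet_finsum_mem_eq hV]
  congr 1
  · rw [← finsum_one, Nat.cast_finsum_mem hE, Nat.cast_one]
  · refine finsum_mem_congr rfl fun v _ => ?_
    simp only [mes, div_eq_mul_inv, finsum_mem_mul]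

theorem neighborSet_eq_of_notMem_bdry {H : G.Subgraph} {v : V} (hv : v ∈ H.verts)
    (hb : v ∉ bdry G H) (hfin : (G.neighborSet v).Finite) : H.neighborSet v = G.neighborSet v :=
  Set.eq_of_subset_of_ncard_le (H.neighborSet_subset v) (not_lt.mp fun h => hb ⟨hv, h⟩) hfin

theorem ncard_bdry_le_degBdry {H : G.Subgraph} (hV : H.verts.Finite) (hH : H.Connected)
    (hE : H.edgeSet.Nonempty) (hlf : ∀ v : V, (G.neighborSet v).Finite) :
    ((bdry G H).ncard : ℝ) ≤ degBdry G H := by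
  have h := ncard_nsmul_le_finsum_mem (hV.subset fun v hv => hv.1) (a := (1 : ℝ))
    (f := fun v => ((H.neighborSet v).ncard : ℝ)) fun v (hv : v ∈ bdry G H) =>
    Nat.one_le_cast.mpr <| (Set.ncard_pos <| (hlf v).subset (H.neighborSet_subset v)).mpr
      (hH.neighborSet_nonempty hE hv.1)
  rwa [nsmul_one] at h

theorem ncard_interior_add_degBdry_div_le {H : G.Subgraph} (hV : H.verts.Finite)
    (hlf : ∀ v : V, (G.neighborSet v).Finite) (hmpos : ∀ v ∈ H.verts, 0 < mval G ℓ v)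
    {M : ℝ} (hM0 : 0 < M) (hM : ∀ v : V, ∀ e ∈ G.incidenceSet v, mval G ℓ v ≤ M * ℓ e) :
    ((H.verts \ bdry G H).ncard : ℝ) + degBdry G H / M
      ≤ ∑ᶠ v ∈ H.verts, mes ℓ (H.incidenceSet v) / mval G ℓ v := by
  have hB : bdry G H ⊆ H.verts := fun v hv => hv.1
  rw [← finsum_mem_add_sdiff hB hV, add_comm]
  refine add_le_add ?_ ?_
  · rw [degBdry, div_eq_mul_inv, finsum_mem_mul]
    refine finsum_mem_le_finsum_mem (hV.subset hB) fun v hv => ?_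
    have h := ncard_mul_mval_le_mul_mes (hM v) ((finite_incidenceSet (hlf v)).subset
      (H.incidenceSet_subset_incidenceSet v)) (H.incidenceSet_subset_incidenceSet v)
    rw [H.ncard_incidenceSet] at h
    rw [← div_eq_mul_inv, div_le_div_iff₀ hM0 (hmpos v hv.1)]
    linarith
  · have h := ncard_nsmul_le_finsum_mem (hV.sdiff (t := bdry G H))
      (f := fun v => mes ℓ (H.incidenceSet v) / mval G ℓ v) (a := 1) fun v hv => by
        rw [Subgraph.incidenceSet_eq_of_neighborSet_eq
          (neighborSet_eq_of_notMem_bdry hv.1 hv.2 (hlf v)), ← mval_eq_mes,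
          div_self (hmpos v hv.1).ne']
    rwa [nsmul_one] at h

theorem mul_mes_le_degBdry_sub (hacyc : G.IsAcyclic) (hlf : ∀ v : V, (G.neighborSet v).Finite)
    (hpos : ∀ e ∈ G.edgeSet, 0 < ℓ e) {c₀ M : ℝ} (hc : ∀ e ∈ G.edgeSet, c₀ ≤ cVal G ℓ e)
    (hM0 : 0 < M) (hM : ∀ v : V, ∀ e ∈ G.incidenceSet v, mval G ℓ v ≤ M * ℓ e)
    {H : G.Subgraph} (hV : H.verts.Finite) (hH : H.Connected) (hE : H.edgeSet.Nonempty) :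
    c₀ * mes ℓ H.edgeSet ≤ degBdry G H - degBdry G H / M := by
  have hsum : c₀ * mes ℓ H.edgeSet ≤ ∑ᶠ e ∈ H.edgeSet, cVal G ℓ e * ℓ e := by
    rw [mes, mul_finsum_mem]
    exact finsum_mem_le_finsum_mem (Subgraph.edgeSet_finite hV) fun e he =>
      mul_le_mul_of_nonneg_right (hc e (H.edgeSet_subset he)) (hpos e (H.edgeSet_subset he)).le
  rw [finsum_cVal_mul_self hV fun e he => (hpos e (H.edgeSet_subset he)).ne'] at hsum
  have hshare := ncard_interior_add_degBdry_div_le hV hlf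
    (fun v hv => mval_pos hpos (hlf v) ((hH.neighborSet_nonempty hE hv).mono
      (H.neighborSet_subset v))) hM0 hM
  have hcount : (H.edgeSet.ncard : ℝ) + 1 = (H.verts \ bdry G H).ncard + (bdry G H).ncard := by
    exact_mod_cast (hacyc.ncard_edgeSet_add_one_of_subgraph hV hH).trans
      (Set.ncard_sdiff_add_ncard_of_subset (s := bdry G H) (fun v hv => hv.1) hV).symm
  linarith [ncard_bdry_le_degBdry hV hH hE hlf]

end MetricGraph

theorem statement_15_general {V : Type*} [Infinite V] (G : SimpleGraph V)
    (hacyc : G.IsAcyclic)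
    (hlf : ∀ v : V, (G.neighborSet v).Finite)
    (hdeg : ∀ v : V, 3 ≤ (G.neighborSet v).ncard)
    (ℓ : Sym2 V → ℝ) (hpos : ∀ e ∈ G.edgeSet, 0 < ℓ e)
    (c₀ M : ℝ) (hc₀ : 0 < c₀)
    (hc : ∀ e ∈ G.edgeSet, c₀ ≤ cVal G ℓ e)
    (hM : ∀ v : V, ∀ e ∈ G.incidenceSet v, mval G ℓ v ≤ M * ℓ e) :
    c₀ * M / (M - 1) ≤ alpha G ℓ ∧ 0 < c₀ * M / (M - 1) := by
  obtain ⟨v₀⟩ : Nonempty V := inferInstance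
  have hnb (v : V) : (G.neighborSet v).Nonempty :=
    (Set.ncard_pos (hlf v)).mp (by linarith [hdeg v])
  have hM3 : (3 : ℝ) ≤ M :=
    (Nat.ofNat_le_cast.mpr (hdeg v₀)).trans (ncard_neighborSet_le hpos (hlf v₀) (hnb v₀) (hM v₀))
  have hM1 : 0 < M - 1 := by linarith
  refine ⟨le_csInf ?_ ?_, div_pos (mul_pos hc₀ (by linarith)) hM1⟩
  · obtain ⟨w, hw⟩ := hnb v₀
    exact ⟨_, G.subgraphOfAdj hw, (Set.finite_singleton w).insert v₀,
      Subgraph.subgraphOfAdj_connected hw, ⟨s(v₀, w), G.subgraphOfAdj_adj_self hw⟩, rfl⟩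
  · rintro _ ⟨H, hV, hH, hE, rfl⟩
    have hmes : 0 < mes ℓ H.edgeSet :=
      finsum_mem_pos (Subgraph.edgeSet_finite hV) hE fun e he => hpos e (H.edgeSet_subset he)
    have hkey := mul_mes_le_degBdry_sub hacyc hlf hpos hc (by linarith) hM hV hH hE
    rw [le_div_iff₀ hmes]
    calc c₀ * M / (M - 1) * mes ℓ H.edgeSet = M / (M - 1) * (c₀ * mes ℓ H.edgeSet) := by ring
      _ ≤ M / (M - 1) * (degBdry G H - degBdry G H / M) := by gcongr
      _ = degBdry G H := by field_simp

/-- Theorem 3.2 for trees: if `c(e) ≥ c₀ > 0` for all edges and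
`m(v) ≤ M·ℓ(e)` for every vertex `v` and edge `e` incident to `v`, then
`α(G) ≥ c₀·M/(M−1) > 0`. -/
theorem statement_15 {V : Type*} [Infinite V] (G : SimpleGraph V)
    (hconn : G.Connected) (hacyc : G.IsAcyclic)
    (hlf : ∀ v : V, (G.neighborSet v).Finite)
    (hdeg : ∀ v : V, 3 ≤ (G.neighborSet v).ncard)
    (ℓ : Sym2 V → ℝ) (hpos : ∀ e ∈ G.edgeSet, 0 < ℓ e)
    (c₀ M : ℝ) (hc₀ : 0 < c₀)
    (hc : ∀ e ∈ G.edgeSet, c₀ ≤ cVal G ℓ e)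
    (hM : ∀ v : V, ∀ e ∈ G.incidenceSet v, mval G ℓ v ≤ M * ℓ e) :
    c₀ * M / (M - 1) ≤ alpha G ℓ ∧ 0 < c₀ * M / (M - 1) :=
  statement_15_general G hacyc hlf hdeg ℓ hpos c₀ M hc₀ hc hM
end
end

section
/- Let p ≥ 3 be an integer and let G = (V,E) be an infinite tree (a connected acyclic simple graph) in which every vertex has degree exactly p, equipped with the equilateral edge lengths ℓ(e) = 1 for all e ∈ E. Then α(G) = (p−2)/(p−1). -/
open scoped BigOperators

noncomputable section

variable {V : Type*}

/-!
Let `H` be a finite subtree with `m` edges, `i` interior vertices (those of full degree `p`) and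
boundary `∂H`. The handshake lemma and `|V(H)| = m + 1` give `deg(∂H) + p i = 2m` and
`i + |∂H| = m + 1`. As every boundary vertex has degree at least one, `|∂H| ≤ deg(∂H)`,
whence `m ≥ (p - 1) i + 1` and `(p - 1) deg(∂H) - (p - 2) m = p (m - (p - 1) i) ≥ 0`.
Equality `|∂H| = deg(∂H)` holds for the star of a finite subtree `K` (all edges meeting `K`),
whose boundary consists of leaves; its ratio `((p - 2)|K| + 2) / ((p - 1)|K| + 1)` tends to
`(p - 2) / (p - 1)` as `|K| → ∞`.
-/

open SimpleGraph

variable {G : SimpleGraph V}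

lemma SimpleGraph.IsAcyclic.eq_of_adj_of_walk (hG : G.IsAcyclic) {w x u : V} (hx : G.Adj w x)
    (hu : G.Adj w u) (q : G.Walk x u) (hw : w ∉ q.support) : x = u := by
  have hmem := isBridge_iff_forall_walk_mem_edges.mp (isAcyclic_iff_forall_adj_isBridge.mp hG hu)
    (Walk.cons hx q)
  rw [Walk.edges_cons, List.mem_cons] at hmem
  rcases hmem with h | h
  · exact (Sym2.congr_right.mp h).symm
  · exact absurd (q.fst_mem_support_of_mem_edges h) hw

lemma SimpleGraph.Preconnected.exists_adj_mem_notMem (hG : G.Preconnected) {s : Set V}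
    (hs : s.Nonempty) (hs' : sᶜ.Nonempty) : ∃ u ∈ s, ∃ w ∉ s, G.Adj u w := by
  obtain ⟨u, hu⟩ := hs
  obtain ⟨v, hv⟩ := hs'
  obtain ⟨d, -, hd, hd'⟩ := (hG u v).some.exists_boundary_dart s hu hv
  exact ⟨d.fst, hd, d.snd, hd', d.adj⟩

namespace SimpleGraph.Subgraph

lemma ncard_edgeSet_coe (H : G.Subgraph) : H.coe.edgeSet.ncard = H.edgeSet.ncard := by
  rw [← H.image_coe_edgeSet_coe,
    Set.ncard_image_of_injective _ (Sym2.map.injective Subtype.val_injective)]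

lemma finsum_ncard_neighborSet (H : G.Subgraph) (hfin : H.verts.Finite) :
    ∑ᶠ v ∈ H.verts, (H.neighborSet v).ncard = 2 * H.edgeSet.ncard := by
  classical
  have := hfin.fintype
  rw [← ncard_edgeSet_coe, ← Nat.card_coe_set_eq, Nat.card_eq_fintype_card, ← edgeFinset_card,
    ← H.coe.sum_degrees_eq_twice_card_edges, ← finsum_eq_sum_of_fintype,
    ← finsum_set_coe_eq_finsum_mem]
  exact finsum_congr fun v => by
    rw [Subgraph.coe_degree, ← Subgraph.finset_card_neighborSet_eq_degree,
      Set.ncard_eq_toFinset_card']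

lemma ncard_edgeSet_add_one (hG : G.IsAcyclic) {H : G.Subgraph} (hH : H.Connected)
    (hfin : H.verts.Finite) : H.edgeSet.ncard + 1 = H.verts.ncard := by
  have : Finite H.verts := hfin
  have := (isTree_iff_connected_and_card.mp ⟨hH.coe, hG.subgraph H⟩).2
  rwa [Nat.card_coe_set_eq, ncard_edgeSet_coe, Nat.card_coe_set_eq] at this

end SimpleGraph.Subgraph

lemma SimpleGraph.Connected.exists_connected_subgraph_ncard_eq [Infinite V] (hG : G.Connected)
    (n : ℕ) : ∃ K : G.Subgraph, K.Connected ∧ K.verts.Finite ∧ K.verts.ncard = n + 1 := by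
  induction n with
  | zero =>
    obtain ⟨v⟩ := hG.nonempty
    exact ⟨G.singletonSubgraph v, Subgraph.singletonSubgraph_connected, Set.finite_singleton v,
      by simp⟩
  | succ n ih =>
    obtain ⟨K, hKc, hKf, hKn⟩ := ih
    obtain ⟨u, hu, w, hw, huw⟩ :=
      hG.preconnected.exists_adj_mem_notMem hKc.nonempty hKf.infinite_compl.nonempty
    have hverts : (K ⊔ G.subgraphOfAdj huw).verts = insert w K.verts := by
      ext x
      simp only [Subgraph.verts_sup, subgraphOfAdj_verts, Set.mem_union, Set.mem_insert_iff,
        Set.mem_singleton_iff]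
      grind
    refine ⟨K ⊔ G.subgraphOfAdj huw,
      Subgraph.connected_sup hKc.preconnected
        (Subgraph.subgraphOfAdj_connected huw).preconnected ⟨u, hu, by simp⟩, ?_, ?_⟩
    · rw [hverts]; exact hKf.insert w
    · rw [hverts, Set.ncard_insert_of_notMem hw hKf, hKn]

lemma mes_one (E : Set (Sym2 V)) : mes (fun _ => (1 : ℝ)) E = E.ncard := by
  obtain hE | hE := E.infinite_or_finite
  · rw [hE.ncard, mes, finsum_mem_eq_zero_of_infinite (by simpa [Function.support_const]),
      Nat.cast_zero]
  · rw [mes, ← finsum_one, Nat.cast_finsum_mem hE, Nat.cast_one]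

lemma alpha_eq_of_forall_le_of_forall_lt {ℓ : Sym2 V → ℝ} {c : ℝ}
    (hle : ∀ H : G.Subgraph, H.verts.Finite → H.Connected → H.edgeSet.Nonempty →
      c ≤ degBdry G H / mes ℓ H.edgeSet)
    (hlt : ∀ ε > 0, ∃ H : G.Subgraph, H.verts.Finite ∧ H.Connected ∧ H.edgeSet.Nonempty ∧
      degBdry G H / mes ℓ H.edgeSet < c + ε) :
    alpha G ℓ = c := by
  have hbdd : BddBelow {x | ∃ H : G.Subgraph, H.verts.Finite ∧ H.Connected ∧
      H.edgeSet.Nonempty ∧ x = degBdry G H / mes ℓ H.edgeSet} := by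
    refine ⟨c, ?_⟩
    rintro _ ⟨H, hf, hc, hn, rfl⟩
    exact hle H hf hc hn
  refine le_antisymm (le_of_forall_pos_lt_add fun ε hε => ?_) (le_csInf ?_ ?_)
  · obtain ⟨H, hf, hc, hn, hH⟩ := hlt ε hε
    exact csInf_lt_of_lt hbdd ⟨H, hf, hc, hn, rfl⟩ hH
  · obtain ⟨H, hf, hc, hn, -⟩ := hlt 1 one_pos
    exact ⟨_, H, hf, hc, hn, rfl⟩
  · rintro _ ⟨H, hf, hc, hn, rfl⟩
    exact hle H hf hc hn

lemma degBdry_eq_cast {H : G.Subgraph} (hfin : H.verts.Finite) :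
    degBdry G H = ((∑ᶠ v ∈ bdry G H, (H.neighborSet v).ncard : ℕ) : ℝ) :=
  (Nat.cast_finsum_mem (hfin.subset fun _ hv => hv.1) _).symm

lemma ncard_bdry_le_finsum_ncard_neighborSet {H : G.Subgraph} (hfin : H.verts.Finite)
    (hconn : H.Connected) (hne : H.edgeSet.Nonempty) :
    (bdry G H).ncard ≤ ∑ᶠ v ∈ bdry G H, (H.neighborSet v).ncard := by
  have hB : (bdry G H).Finite := hfin.subset fun _ hv => hv.1
  obtain ⟨e, he⟩ := hne
  have : Nontrivial H.verts := by
    induction e using Sym2.ind with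
    | _ a b =>
      exact ⟨⟨a, H.edge_vert he⟩, ⟨b, H.edge_vert he.symm⟩, by simpa using he.ne⟩
  rw [← finsum_one, finsum_mem_eq_finite_toFinset_sum _ hB,
    finsum_mem_eq_finite_toFinset_sum _ hB]
  refine Finset.sum_le_sum fun v hv => ?_
  obtain ⟨w, hw⟩ :=
    hconn.preconnected.exists_adj_of_nontrivial ⟨v, (hB.mem_toFinset.mp hv).1⟩
  exact Nat.one_le_iff_ne_zero.mpr <|
    Set.ncard_ne_zero_of_mem hw (hfin.subset (H.neighborSet_subset_verts v))

section Regular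

variable {p : ℕ}

lemma ncard_neighborSet_eq_of_notMem_bdry (hreg : ∀ v, (G.neighborSet v).ncard = p)
    (hp : p ≠ 0) {H : G.Subgraph} {v : V} (hv : v ∈ H.verts) (hvb : v ∉ bdry G H) :
    (H.neighborSet v).ncard = p := by
  have hle : (H.neighborSet v).ncard ≤ p := hreg v ▸
    Set.ncard_le_ncard (H.neighborSet_subset v) (Set.finite_of_ncard_ne_zero (hreg v ▸ hp))
  have hnlt : ¬ (H.neighborSet v).ncard < p := fun h => hvb ⟨hv, hreg v ▸ h⟩
  omega

lemma finsum_bdry_add_mul_ncard (hreg : ∀ v, (G.neighborSet v).ncard = p) (hp : p ≠ 0)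
    {H : G.Subgraph} (hfin : H.verts.Finite) :
    ∑ᶠ v ∈ bdry G H, (H.neighborSet v).ncard + p * (H.verts \ bdry G H).ncard =
      2 * H.edgeSet.ncard := by
  have hint : ∑ᶠ v ∈ H.verts \ bdry G H, (H.neighborSet v).ncard =
      p * (H.verts \ bdry G H).ncard := by
    rw [finsum_mem_congr rfl fun v hv => ncard_neighborSet_eq_of_notMem_bdry hreg hp hv.1 hv.2,
      ← smul_eq_mul, ← finsum_one, smul_finsum_mem (hfin.sdiff)]
    simp
  rw [← hint, finsum_mem_add_sdiff (fun v hv => hv.1) hfin, H.finsum_ncard_neighborSet hfin]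

lemma sub_two_div_sub_one_le_degBdry_div_mes (hp : 3 ≤ p) (hacyc : G.IsAcyclic)
    (hreg : ∀ v, (G.neighborSet v).ncard = p) {H : G.Subgraph} (hfin : H.verts.Finite)
    (hconn : H.Connected) (hne : H.edgeSet.Nonempty) :
    ((p : ℝ) - 2) / ((p : ℝ) - 1) ≤ degBdry G H / mes (fun _ => (1 : ℝ)) H.edgeSet := by
  set D := ∑ᶠ v ∈ bdry G H, (H.neighborSet v).ncard
  set i := (H.verts \ bdry G H).ncard
  set m := H.edgeSet.ncard
  have hsum : D + p * i = 2 * m := finsum_bdry_add_mul_ncard hreg (by omega) hfin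
  have hcount : i + (bdry G H).ncard = m + 1 := by
    rw [Set.ncard_sdiff_add_ncard_of_subset (fun _ hv => hv.1) hfin,
      Subgraph.ncard_edgeSet_add_one hacyc hconn hfin]
  have hB := ncard_bdry_le_finsum_ncard_neighborSet hfin hconn hne
  have hp' : (3 : ℝ) ≤ p := by exact_mod_cast hp
  have hsumR : (D : ℝ) + p * i = 2 * m := by exact_mod_cast hsum
  have hcountR : (i : ℝ) + (bdry G H).ncard = m + 1 := by exact_mod_cast hcount
  have hBR : ((bdry G H).ncard : ℝ) ≤ D := by exact_mod_cast hB
  have hm : ((p : ℝ) - 1) * i + 1 ≤ m := by linear_combination hsumR - hcountR + hBR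
  have hkey : ((p : ℝ) - 2) * m ≤ D * ((p : ℝ) - 1) := by
    nlinarith [mul_le_mul_of_nonneg_left hm (by positivity : (0 : ℝ) ≤ p)]
  rw [degBdry_eq_cast hfin, mes_one,
    div_le_div_iff₀ (by linarith) (by nlinarith [Nat.cast_nonneg (α := ℝ) i])]
  exact hkey

section Star

lemma le_starSubgraph (K : G.Subgraph) : K ≤ starSubgraph G K.verts :=
  ⟨fun _ hv => Or.inl hv, fun _ _ hab => ⟨K.adj_sub hab, Or.inl (K.edge_vert hab)⟩⟩

lemma starSubgraph_verts_finite (hG : ∀ v, (G.neighborSet v).Finite) {U : Set V}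
    (hU : U.Finite) : (starSubgraph G U).verts.Finite := by
  refine hU.union ((hU.biUnion fun u _ => hG u).subset ?_)
  rintro w ⟨u, hu, huw⟩
  exact Set.mem_biUnion hu huw

lemma neighborSet_starSubgraph_of_mem {U : Set V} {u : V} (hu : u ∈ U) :
    (starSubgraph G U).neighborSet u = G.neighborSet u := by
  ext x
  exact ⟨fun h => h.1, fun h => ⟨h, Or.inl hu⟩⟩

variable {K : G.Subgraph}

lemma starSubgraph_connected (hK : K.Connected) : (starSubgraph G K.verts).Connected := by
  set H := starSubgraph G K.verts
  obtain ⟨u₀, hu₀⟩ := hK.nonempty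
  have hreach :
      ∀ u (hu : u ∈ K.verts), H.coe.Reachable ⟨u₀, Or.inl hu₀⟩ ⟨u, Or.inl hu⟩ :=
    fun u hu => (hK.coe ⟨u₀, hu₀⟩ ⟨u, hu⟩).map (Subgraph.inclusion (le_starSubgraph K))
  rw [Subgraph.connected_iff', connected_iff_exists_forall_reachable]
  refine ⟨⟨u₀, Or.inl hu₀⟩, ?_⟩
  rintro ⟨x, hx | ⟨u, hu, hux⟩⟩
  · exact hreach x hx
  · exact (hreach u hu).trans (show H.Adj u x from ⟨hux, Or.inl hu⟩).coe.reachable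

lemma neighborSet_starSubgraph_of_notMem (hacyc : G.IsAcyclic) (hK : K.Connected) {w : V}
    (hw : w ∈ (starSubgraph G K.verts).verts) (hwK : w ∉ K.verts) :
    ∃ u, (starSubgraph G K.verts).neighborSet w = {u} := by
  obtain hw | ⟨u, hu, huw⟩ := hw
  · exact absurd hw hwK
  refine ⟨u, Set.eq_singleton_iff_unique_mem.mpr ⟨⟨huw.symm, Or.inr hu⟩, ?_⟩⟩
  rintro x ⟨hwx, hx | hx⟩
  · exact absurd hx hwK
  obtain ⟨q⟩ := hK.coe ⟨x, hx⟩ ⟨u, hu⟩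
  refine hacyc.eq_of_adj_of_walk hwx huw.symm (q.map K.hom) fun hmem => hwK ?_
  obtain ⟨z, -, rfl⟩ := List.mem_map.mp (q.support_map K.hom ▸ hmem)
  exact z.2

lemma starSubgraph_edgeSet_nonempty (hG : ∀ v, (G.neighborSet v).Nonempty) {U : Set V}
    (hU : U.Nonempty) : (starSubgraph G U).edgeSet.Nonempty := by
  obtain ⟨u, hu⟩ := hU
  obtain ⟨x, hx⟩ := hG u
  exact ⟨s(u, x), hx, Or.inl hu⟩

lemma bdry_starSubgraph (hdeg : ∀ v, 1 < (G.neighborSet v).ncard) (hacyc : G.IsAcyclic)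
    (hK : K.Connected) :
    bdry G (starSubgraph G K.verts) = (starSubgraph G K.verts).verts \ K.verts := by
  ext v
  constructor
  · rintro ⟨hv, hlt⟩
    refine ⟨hv, fun hvK => ?_⟩
    rw [neighborSet_starSubgraph_of_mem hvK] at hlt
    exact lt_irrefl _ hlt
  · rintro ⟨hv, hvK⟩
    obtain ⟨u, hu⟩ := neighborSet_starSubgraph_of_notMem hacyc hK hv hvK
    refine ⟨hv, ?_⟩
    rw [hu, Set.ncard_singleton]
    exact hdeg v

lemma degBdry_div_mes_starSubgraph (hp : 3 ≤ p) (hacyc : G.IsAcyclic)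
    (hreg : ∀ v, (G.neighborSet v).ncard = p) (hK : K.Connected) (hKf : K.verts.Finite) :
    degBdry G (starSubgraph G K.verts) /
        mes (fun _ => (1 : ℝ)) (starSubgraph G K.verts).edgeSet =
      (((p : ℝ) - 2) * K.verts.ncard + 2) / (((p : ℝ) - 1) * K.verts.ncard + 1) := by
  set H := starSubgraph G K.verts
  have hfin : H.verts.Finite := starSubgraph_verts_finite
    (fun v => Set.finite_of_ncard_ne_zero (by rw [hreg v]; omega)) hKf
  have hbdry := bdry_starSubgraph (fun v => by rw [hreg v]; omega) hacyc hK
  have hint : H.verts \ bdry G H = K.verts := by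
    rw [hbdry, Set.sdiff_sdiff_cancel_left (le_starSubgraph K).1]
  have hD : ∑ᶠ v ∈ bdry G H, (H.neighborSet v).ncard = (bdry G H).ncard := by
    rw [← finsum_one]
    refine finsum_mem_congr rfl fun v hv => ?_
    rw [hbdry] at hv
    obtain ⟨u, hu⟩ := neighborSet_starSubgraph_of_notMem hacyc hK hv.1 hv.2
    rw [hu, Set.ncard_singleton]
  have hsum := finsum_bdry_add_mul_ncard hreg (by omega) hfin
  have hcount : K.verts.ncard + (bdry G H).ncard = H.edgeSet.ncard + 1 := by
    rw [← hint, Set.ncard_sdiff_add_ncard_of_subset (fun _ hv => hv.1) hfin,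
      Subgraph.ncard_edgeSet_add_one hacyc (starSubgraph_connected hK) hfin]
  rw [hint, hD] at hsum
  have hsumR : ((bdry G H).ncard : ℝ) + p * K.verts.ncard = 2 * H.edgeSet.ncard := by
    exact_mod_cast hsum
  have hcountR : (K.verts.ncard : ℝ) + (bdry G H).ncard = H.edgeSet.ncard + 1 := by
    exact_mod_cast hcount
  rw [degBdry_eq_cast hfin, hD, mes_one]
  congr 1
  · linear_combination -hsumR + 2 * hcountR
  · linear_combination -hsumR + hcountR

end Star

end Regular

lemma div_lt_sub_two_div_sub_one_add {p s ε : ℝ} (hp : 3 ≤ p) (hs : 0 < s)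
    (hps : p < ε * s) : ((p - 2) * s + 2) / ((p - 1) * s + 1) < (p - 2) / (p - 1) + ε := by
  have hε : 0 < ε := by nlinarith
  rw [div_add' _ _ _ (by linarith), div_lt_div_iff₀ (by nlinarith) (by linarith)]
  have hεs : ε * s ≤ ε * s * (p - 1) ^ 2 :=
    le_mul_of_one_le_right (by positivity) (by nlinarith)
  nlinarith [mul_pos hε (show 0 < p - 1 by linarith)]

/-- for the equilateral `p`-regular infinite metric tree (`p ≥ 3`),
`α(G) = (p−2)/(p−1)`. -/
theorem statement_16 {V : Type*} [Infinite V] (p : ℕ) (hp : 3 ≤ p)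
    (G : SimpleGraph V) (hconn : G.Connected) (hacyc : G.IsAcyclic)
    (hreg : ∀ v : V, (G.neighborSet v).ncard = p) :
    alpha G (fun _ => (1 : ℝ)) = ((p : ℝ) - 2) / ((p : ℝ) - 1) := by
  refine alpha_eq_of_forall_le_of_forall_lt
    (fun H hfin hH hne => sub_two_div_sub_one_le_degBdry_div_mes hp hacyc hreg hfin hH hne)
    fun ε hε => ?_
  obtain ⟨n, hn⟩ := exists_nat_gt (p / ε)
  obtain ⟨K, hK, hKf, hKn⟩ := hconn.exists_connected_subgraph_ncard_eq n
  have hGne : ∀ v, (G.neighborSet v).Nonempty :=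
    fun v => Set.nonempty_of_ncard_ne_zero (by rw [hreg v]; omega)
  have hGfin : ∀ v, (G.neighborSet v).Finite :=
    fun v => Set.finite_of_ncard_ne_zero (by rw [hreg v]; omega)
  refine ⟨starSubgraph G K.verts, starSubgraph_verts_finite hGfin hKf, starSubgraph_connected hK,
    starSubgraph_edgeSet_nonempty hGne hK.nonempty, ?_⟩
  rw [degBdry_div_mes_starSubgraph hp hacyc hreg hK hKf, hKn]
  refine div_lt_sub_two_div_sub_one_add (by exact_mod_cast hp) (by positivity) ?_
  rw [div_lt_iff₀ hε] at hn
  push_cast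
  linarith
end
end
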